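/- arXiv:1702.03894 — 3 statements merged into one kernel-verified Lean document; each statement's English description precedes it below -/
import Mathlib

section
/- Let α be an ordinal and let w ⊆ α be a finite set of non-limit ordinals (each member is 0 or a successor) with |w| = n ≥ 1. Then the restricted tree 𝒯_α ↾ w = {η ∈ 𝒯_α : min(dom(η)) ∈ w and η(β) = 0 for all β ∈ dom(η) \ w}, ordered by function extension ⊆, is order-isomorphic to the set of nonempty sequences of natural numbers of length at most n, ordered by initial-segment. -/
/-!
An element `η` of `𝒯_α ↾ w` is determined by its start, an element of `w`, and its values
on the elements of `w` from the start upwards, since it vanishes elsewhere. Read from the top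
element of `w` down, these values form a nonempty sequence of length at most `|w|`, and every
such sequence arises. Extending `η` means lowering its start while keeping the values above
it, which is exactly extending the sequence at its end.
-/

universe u

/-- An element of the tree `𝒯_α`: a function whose domain is an end-segment
`[start, α)` of `α` with `start` zero or a successor, values in `ω`,
with finite support. We encode it as an `Option ℕ`-valued function on all
ordinals, which is `some _` exactly on the domain. -/
structure TreeT (α : Ordinal.{u}) : Type (u + 1) where
  toFun : Ordinal.{u} → Option ℕ
  start : Ordinal.{u}
  start_nonlimit : start = 0 ∨ ∃ γ : Ordinal.{u}, start = Order.succ γ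
  start_le : start ≤ α
  dom_iff : ∀ γ : Ordinal.{u}, (toFun γ).isSome ↔ (start ≤ γ ∧ γ < α)
  finite_support : {γ : Ordinal.{u} | ∃ n : ℕ, n ≠ 0 ∧ toFun γ = some n}.Finite

namespace TreeT

/-- The tree partial order `⊴`: extension of partial functions. -/
def Ext {α : Ordinal.{u}} (f g : TreeT α) : Prop :=
  ∀ (γ : Ordinal.{u}) (n : ℕ), f.toFun γ = some n → g.toFun γ = some n

/-- The least ordinal `δ` (at least both starts) such that `f` and `g`
agree on `[δ, α)`. -/
noncomputable def meetStart {α : Ordinal.{u}} (f g : TreeT α) : Ordinal.{u} :=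
  sInf {δ : Ordinal.{u} | f.start ≤ δ ∧ g.start ≤ δ ∧
    ∀ ξ : Ordinal.{u}, δ ≤ ξ → ξ < α → f.toFun ξ = g.toFun ξ}

/-- The lexicographic order on `𝒯_α`: `f <_lex g` iff `f ⊊ g`, or `f, g` are
`⊆`-incomparable, the least ordinal from which they agree onward is a successor
`γ + 1`, and `f γ < g γ`. -/
noncomputable def Lex {α : Ordinal.{u}} (f g : TreeT α) : Prop :=
  (Ext f g ∧ f ≠ g) ∨
  (¬ Ext f g ∧ ¬ Ext g f ∧ ∃ (γ : Ordinal.{u}) (m n : ℕ),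
    meetStart f g = Order.succ γ ∧ f.toFun γ = some m ∧ g.toFun γ = some n ∧ m < n)

end TreeT

namespace TreeT

variable {α : Ordinal.{u}}

def value (η : TreeT α) (γ : Ordinal.{u}) : ℕ := (η.toFun γ).getD 0

theorem mem_dom_of_toFun_eq_some {η : TreeT α} {γ : Ordinal.{u}} {n : ℕ}
    (h : η.toFun γ = some n) : η.start ≤ γ ∧ γ < α :=
  (η.dom_iff γ).1 (by simp [h])

theorem toFun_eq_some_value {η : TreeT α} {γ : Ordinal.{u}} (h₁ : η.start ≤ γ) (h₂ : γ < α) :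
    η.toFun γ = some (η.value γ) := by
  obtain ⟨n, hn⟩ := Option.isSome_iff_exists.1 ((η.dom_iff γ).2 ⟨h₁, h₂⟩)
  simp [value, hn]

theorem Ext.start_le {f g : TreeT α} (h : Ext f g) (hf : f.start < α) : g.start ≤ f.start :=
  (mem_dom_of_toFun_eq_some (h _ _ (toFun_eq_some_value le_rfl hf))).1

theorem Ext.antisymm {f g : TreeT α} (hfg : Ext f g) (hgf : Ext g f) : f = g := by
  have hstart : f.start = g.start := by
    refine le_antisymm (not_lt.1 fun hlt => ?_) (not_lt.1 fun hlt => ?_)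
    · exact hlt.not_ge (hgf.start_le (hlt.trans_le f.start_le))
    · exact hlt.not_ge (hfg.start_le (hlt.trans_le g.start_le))
  have htoFun : f.toFun = g.toFun := by
    funext γ
    cases hf : f.toFun γ with
    | some n => exact (hfg γ n hf).symm
    | none =>
      cases hg : g.toFun γ with
      | none => rfl
      | some m => simpa [hf] using hgf γ m hg
  cases f; cases g
  simp_all

noncomputable def ofFun (s : Ordinal.{u}) (hs : s = 0 ∨ ∃ γ, s = Order.succ γ) (hsα : s ≤ α)
    (v : Ordinal.{u} → ℕ) (hv : (Function.support v).Finite) : TreeT α where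
  toFun γ := if s ≤ γ ∧ γ < α then some (v γ) else none
  start := s
  start_nonlimit := hs
  start_le := hsα
  dom_iff γ := by split_ifs with h <;> simp [h]
  finite_support := hv.subset fun γ ⟨n, hn, h⟩ => by
    split_ifs at h
    cases h
    exact hn

theorem value_ofFun {s : Ordinal.{u}} {hs : s = 0 ∨ ∃ γ, s = Order.succ γ} {hsα : s ≤ α}
    {v : Ordinal.{u} → ℕ} {hv : (Function.support v).Finite} {γ : Ordinal.{u}}
    (h₁ : s ≤ γ) (h₂ : γ < α) : (ofFun s hs hsα v hv).value γ = v γ := by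
  simp [value, ofFun, h₁, h₂]

end TreeT

section Levels

variable (w : Finset Ordinal.{u})

/-- The elements of `w` listed from the top down: `level w 0` is the largest. -/
noncomputable def level (i : Fin w.card) : Ordinal.{u} := w.orderIsoOfFin rfl i.rev

noncomputable def rank {γ : Ordinal.{u}} (hγ : γ ∈ w) : Fin w.card :=
  ((w.orderIsoOfFin rfl).symm ⟨γ, hγ⟩).rev

variable {w}

theorem level_mem (i : Fin w.card) : level w i ∈ w := (w.orderIsoOfFin rfl i.rev).2

@[simp]
theorem level_rank {γ : Ordinal.{u}} (hγ : γ ∈ w) : level w (rank w hγ) = γ := by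
  simp [level, rank]

@[simp]
theorem rank_level (i : Fin w.card) : rank w (level_mem i) = i := by
  change ((w.orderIsoOfFin rfl).symm (w.orderIsoOfFin rfl i.rev)).rev = i
  simp

theorem level_le_level_iff {i j : Fin w.card} : level w i ≤ level w j ↔ j ≤ i := by
  rw [level, level, Subtype.coe_le_coe, OrderIso.le_iff_le, Fin.rev_le_rev]

end Levels

variable (α : Ordinal.{u}) (w : Finset Ordinal.{u}) in
abbrev RestrictedTree : Type (u + 1) :=
  {η : TreeT α // η.start ∈ w ∧ ∀ (β : Ordinal.{u}) (m : ℕ), η.toFun β = some m → β ∉ w → m = 0}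

namespace RestrictedTree

variable {α : Ordinal.{u}} {w : Finset Ordinal.{u}}

theorem value_eq_zero (η : RestrictedTree α w) {γ : Ordinal.{u}} (hγ : γ ∉ w) :
    η.1.value γ = 0 := by
  cases h : η.1.toFun γ with
  | none => simp [TreeT.value, h]
  | some m => simpa [TreeT.value, h] using η.2.2 γ m h hγ

/-- The number of elements of `w` at or above the start of `η`. -/
noncomputable def height (η : RestrictedTree α w) : ℕ := rank w η.2.1 + 1

theorem height_le_card (η : RestrictedTree α w) : height η ≤ w.card := (rank w η.2.1).2

theorem start_le_level_iff (η : RestrictedTree α w) (i : Fin w.card) :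
    η.1.start ≤ level w i ↔ i.1 < height η := by
  conv_lhs => rw [← level_rank η.2.1]
  rw [level_le_level_iff, Fin.le_def, height, Nat.lt_succ_iff]

theorem start_le_start_iff (f g : RestrictedTree α w) :
    g.1.start ≤ f.1.start ↔ height f ≤ height g := by
  conv_lhs => rw [← level_rank f.2.1]
  simp only [start_le_level_iff, height]
  omega

noncomputable def toList (η : RestrictedTree α w) : List ℕ :=
  List.ofFn fun i : Fin (height η) => η.1.value (level w ⟨i, i.2.trans_le (height_le_card η)⟩)

@[simp]
theorem length_toList (η : RestrictedTree α w) : (toList η).length = height η :=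
  List.length_ofFn

@[simp]
theorem getElem_toList (η : RestrictedTree α w) {i : ℕ} (hi : i < (toList η).length) :
    (toList η)[i] =
      η.1.value (level w ⟨i, (length_toList η ▸ hi).trans_le (height_le_card η)⟩) :=
  List.getElem_ofFn _

theorem ext_iff_start_le_and_value_eq (hwα : ∀ β ∈ w, β < α) (f g : RestrictedTree α w) :
    TreeT.Ext f.1 g.1 ↔
      g.1.start ≤ f.1.start ∧ ∀ γ ∈ w, f.1.start ≤ γ → f.1.value γ = g.1.value γ := by
  constructor
  · intro h
    refine ⟨h.start_le (hwα _ f.2.1), fun γ hγ hsγ => ?_⟩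
    have hg := h γ _ (TreeT.toFun_eq_some_value hsγ (hwα γ hγ))
    simp [TreeT.value, hg]
  · rintro ⟨hs, hv⟩ γ n hn
    obtain ⟨hsγ, hγα⟩ := TreeT.mem_dom_of_toFun_eq_some hn
    have hnv : n = f.1.value γ := by simp [TreeT.value, hn]
    rw [TreeT.toFun_eq_some_value (hs.trans hsγ) hγα, hnv]
    by_cases hγ : γ ∈ w
    · rw [hv γ hγ hsγ]
    · rw [value_eq_zero f hγ, value_eq_zero g hγ]

theorem ext_iff_toList_prefix (hwα : ∀ β ∈ w, β < α) (f g : RestrictedTree α w) :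
    TreeT.Ext f.1 g.1 ↔ toList f <+: toList g := by
  simp only [ext_iff_start_le_and_value_eq hwα, List.prefix_iff_getElem, start_le_start_iff,
    length_toList, getElem_toList]
  constructor
  · rintro ⟨hle, hv⟩
    exact ⟨hle, fun i hi => hv _ (level_mem _) ((start_le_level_iff f _).2 hi)⟩
  · rintro ⟨hle, hv⟩
    refine ⟨hle, fun γ hγ hsγ => ?_⟩
    rw [← level_rank hγ] at hsγ ⊢
    exact hv _ ((start_le_level_iff f _).1 hsγ)

theorem toList_ne_nil (η : RestrictedTree α w) : toList η ≠ [] := by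
  simp [← List.length_pos_iff, height]

theorem length_toList_le (η : RestrictedTree α w) : (toList η).length ≤ w.card := by
  simpa using height_le_card η

noncomputable def ofList (hwα : ∀ β ∈ w, β < α) (hw : ∀ β ∈ w, β = 0 ∨ ∃ γ, β = Order.succ γ)
    (l : List ℕ) (hl : l ≠ []) (hlw : l.length ≤ w.card) : RestrictedTree α w :=
  have hi : l.length - 1 < w.card := by have := List.length_pos_iff.2 hl; omega
  ⟨TreeT.ofFun (level w ⟨l.length - 1, hi⟩) (hw _ (level_mem _)) (hwα _ (level_mem _)).le
      (fun γ => if hγ : γ ∈ w then l.getD (rank w hγ) 0 else 0)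
      (w.finite_toSet.subset fun γ hγ => of_not_not fun h => hγ (dif_neg h)),
    level_mem _, fun β m h hβ => by
      simp only [TreeT.ofFun, dif_neg hβ] at h
      split_ifs at h
      exact (Option.some.inj h).symm⟩

theorem toList_ofList (hwα : ∀ β ∈ w, β < α) (hw : ∀ β ∈ w, β = 0 ∨ ∃ γ, β = Order.succ γ)
    (l : List ℕ) (hl : l ≠ []) (hlw : l.length ≤ w.card) :
    toList (ofList hwα hw l hl hlw) = l := by
  have hlen : height (ofList hwα hw l hl hlw) = l.length := by
    have := List.length_pos_iff.2 hl
    simp only [height, ofList, TreeT.ofFun, rank_level]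
    omega
  refine List.ext_getElem (by simp [hlen]) fun i hi hil => ?_
  simp only [getElem_toList, ofList]
  rw [TreeT.value_ofFun, dif_pos (level_mem _), rank_level,
    List.getD_eq_getElem _ _ hil]
  · rw [level_le_level_iff, Fin.mk_le_mk]
    omega
  · exact hwα _ (level_mem _)

noncomputable def toSeq (η : RestrictedTree α w) : {l : List ℕ // l ≠ [] ∧ l.length ≤ w.card} :=
  ⟨toList η, toList_ne_nil η, length_toList_le η⟩

theorem bijective_toSeq (hwα : ∀ β ∈ w, β < α) (hw : ∀ β ∈ w, β = 0 ∨ ∃ γ, β = Order.succ γ) :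
    Function.Bijective (toSeq : RestrictedTree α w → _) := by
  refine ⟨fun f g hfg => Subtype.ext ?_, fun l => ⟨ofList hwα hw l.1 l.2.1 l.2.2, ?_⟩⟩
  · have h : toList f = toList g := congrArg Subtype.val hfg
    exact ((ext_iff_toList_prefix hwα f g).2 (h ▸ List.prefix_rfl)).antisymm
      ((ext_iff_toList_prefix hwα g f).2 (h ▸ List.prefix_rfl))
  · exact Subtype.ext (toList_ofList hwα hw _ _ _)

end RestrictedTree

theorem statement_8_general (α : Ordinal.{0}) (w : Finset Ordinal.{0})
    (hw : ∀ β ∈ w, β < α ∧ (β = 0 ∨ ∃ γ : Ordinal.{0}, β = Order.succ γ)) :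
    ∃ e : {η : TreeT α // η.start ∈ w ∧
        ∀ (β : Ordinal.{0}) (m : ℕ), η.toFun β = some m → β ∉ w → m = 0} ≃
        {l : List ℕ // l ≠ [] ∧ l.length ≤ w.card},
      ∀ f g, TreeT.Ext f.1 g.1 ↔ (e f).1 <+: (e g).1 := by
  have hwα : ∀ β ∈ w, β < α := fun β hβ => (hw β hβ).1
  exact ⟨Equiv.ofBijective _ (RestrictedTree.bijective_toSeq hwα fun β hβ => (hw β hβ).2),
    RestrictedTree.ext_iff_toList_prefix hwα⟩

/-- For a finite set `w` of non-limit ordinals below `α` with `|w| = n ≥ 1`, the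
restricted tree `𝒯_α ↾ w` (elements whose domain starts in `w` and which vanish
off `w`), ordered by extension, is order-isomorphic to the set of nonempty
sequences of naturals of length at most `n`, ordered by initial segment. -/
theorem statement_8 (α : Ordinal.{0}) (w : Finset Ordinal.{0})
    (hw : ∀ β ∈ w, β < α ∧ (β = 0 ∨ ∃ γ : Ordinal.{0}, β = Order.succ γ))
    (hn : 1 ≤ w.card) :
    ∃ e : {η : TreeT α // η.start ∈ w ∧
        ∀ (β : Ordinal.{0}) (m : ℕ), η.toFun β = some m → β ∉ w → m = 0} ≃
        {l : List ℕ // l ≠ [] ∧ l.length ≤ w.card},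
      ∀ f g, TreeT.Ext f.1 g.1 ↔ (e f).1 <+: (e g).1 :=
  statement_8_general α w hw
end

section
/- Let B and C be sets with A = B ∩ C. Let E_B be an equivalence relation on B and E_C an equivalence relation on C such that E_B and E_C restrict to the same equivalence relation on A. Let E be the equivalence relation on B ∪ C generated by E_B ∪ E_C. Then: (1) for b ∈ B and c ∈ C, E(b, c) holds if and only if either b, c ∈ A and they are related in the common restriction, or there exists a ∈ A with E_B(b, a) and E_C(a, c); (2) E restricted to B equals E_B and E restricted to C equals E_C (no new identifications within B or within C are created). -/
/-- Amalgamation of equivalence relations: if `E_B`, `E_C` are equivalence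
relations on sets `B`, `C` restricting to the same relation on `A = B ∩ C`, and
`E` is the equivalence relation generated by their union, then (1) for `b ∈ B`,
`c ∈ C`, `E(b, c)` holds iff `b, c ∈ A` are related in the common restriction,
or some `a ∈ A` satisfies `E_B(b, a)` and `E_C(a, c)`; and (2) `E` restricted to
`B` is `E_B` and `E` restricted to `C` is `E_C`. -/
theorem statement_9 {U : Type*} (B C : Set U) (rB rC : U → U → Prop)
    (hBmem : ∀ x y, rB x y → x ∈ B ∧ y ∈ B)
    (hBrefl : ∀ x ∈ B, rB x x)
    (hBsymm : ∀ x y, rB x y → rB y x)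
    (hBtrans : ∀ x y z, rB x y → rB y z → rB x z)
    (hCmem : ∀ x y, rC x y → x ∈ C ∧ y ∈ C)
    (hCrefl : ∀ x ∈ C, rC x x)
    (hCsymm : ∀ x y, rC x y → rC y x)
    (hCtrans : ∀ x y z, rC x y → rC y z → rC x z)
    (hagree : ∀ x ∈ B ∩ C, ∀ y ∈ B ∩ C, (rB x y ↔ rC x y)) :
    (∀ b ∈ B, ∀ c ∈ C,
      (Relation.EqvGen (fun x y => rB x y ∨ rC x y) b c ↔
        ((b ∈ B ∩ C ∧ c ∈ B ∩ C ∧ rB b c) ∨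
          ∃ a ∈ B ∩ C, rB b a ∧ rC a c))) ∧
    (∀ x ∈ B, ∀ y ∈ B,
      (Relation.EqvGen (fun x y => rB x y ∨ rC x y) x y ↔ rB x y)) ∧
    (∀ x ∈ C, ∀ y ∈ C,
      (Relation.EqvGen (fun x y => rB x y ∨ rC x y) x y ↔ rC x y)) := by
  set R : U → U → Prop := fun x y => rB x y ∨ rC x y ∨
      (∃ a, a ∈ B ∩ C ∧ rB x a ∧ rC a y) ∨
      (∃ a, a ∈ B ∩ C ∧ rC x a ∧ rB a y) with hR
  -- agreement in both directions
  have hBC : ∀ x ∈ B ∩ C, ∀ y ∈ B ∩ C, rB x y → rC x y := fun x hx y hy h =>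
    (hagree x hx y hy).1 h
  have hCB : ∀ x ∈ B ∩ C, ∀ y ∈ B ∩ C, rC x y → rB x y := fun x hx y hy h =>
    (hagree x hx y hy).2 h
  have hRsymm : ∀ x y, R x y → R y x := by
    intro x y h
    rcases h with h | h | ⟨a, ha, h1, h2⟩ | ⟨a, ha, h1, h2⟩
    · exact Or.inl (hBsymm _ _ h)
    · exact Or.inr (Or.inl (hCsymm _ _ h))
    · exact Or.inr (Or.inr (Or.inr ⟨a, ha, hCsymm _ _ h2, hBsymm _ _ h1⟩))
    · exact Or.inr (Or.inr (Or.inl ⟨a, ha, hBsymm _ _ h2, hCsymm _ _ h1⟩))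
  have hRtrans : ∀ x y z, R x y → R y z → R x z := by
    intro x y z hxy hyz
    rcases hxy with h | h | ⟨a, ha, h1, h2⟩ | ⟨a, ha, h1, h2⟩ <;>
      rcases hyz with g | g | ⟨b, hb, g1, g2⟩ | ⟨b, hb, g1, g2⟩
    · exact Or.inl (hBtrans _ _ _ h g)
    · -- rB x y, rC y z : y ∈ B ∩ C
      have hy : y ∈ B ∩ C := ⟨(hBmem _ _ h).2, (hCmem _ _ g).1⟩
      exact Or.inr (Or.inr (Or.inl ⟨y, hy, h, g⟩))
    · exact Or.inr (Or.inr (Or.inl ⟨b, hb, hBtrans _ _ _ h g1, g2⟩))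
    · -- rB x y, rC y b, rB b z : y ∈ B ∩ C so rB y b
      have hy : y ∈ B ∩ C := ⟨(hBmem _ _ h).2, (hCmem _ _ g1).1⟩
      exact Or.inl (hBtrans _ _ _ (hBtrans _ _ _ h (hCB _ hy _ hb g1)) g2)
    · have hy : y ∈ B ∩ C := ⟨(hBmem _ _ g).1, (hCmem _ _ h).2⟩
      exact Or.inr (Or.inr (Or.inr ⟨y, hy, h, g⟩))
    · exact Or.inr (Or.inl (hCtrans _ _ _ h g))
    · -- rC x y, rB y b, rC b z
      have hy : y ∈ B ∩ C := ⟨(hBmem _ _ g1).1, (hCmem _ _ h).2⟩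
      exact Or.inr (Or.inl (hCtrans _ _ _ (hCtrans _ _ _ h (hBC _ hy _ hb g1)) g2))
    · exact Or.inr (Or.inr (Or.inr ⟨b, hb, hCtrans _ _ _ h g1, g2⟩))
    · -- rB x a, rC a y, rB y z : y ∈ B ∩ C
      have hy : y ∈ B ∩ C := ⟨(hBmem _ _ g).1, (hCmem _ _ h2).2⟩
      exact Or.inl (hBtrans _ _ _ (hBtrans _ _ _ h1 (hCB _ ha _ hy h2)) g)
    · exact Or.inr (Or.inr (Or.inl ⟨a, ha, h1, hCtrans _ _ _ h2 g⟩))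
    · -- rB x a, rC a y, rB y b, rC b z : y ∈ B ∩ C
      have hy : y ∈ B ∩ C := ⟨(hBmem _ _ g1).1, (hCmem _ _ h2).2⟩
      exact Or.inr (Or.inr (Or.inl ⟨b, hb,
        hBtrans _ _ _ (hBtrans _ _ _ h1 (hCB _ ha _ hy h2)) g1, g2⟩))
    · -- rB x a, rC a y, rC y b, rB b z
      exact Or.inl (hBtrans _ _ _
        (hBtrans _ _ _ h1 (hCB _ ha _ hb (hCtrans _ _ _ h2 g1))) g2)
    · -- rC x a, rB a y, rB y z
      exact Or.inr (Or.inr (Or.inr ⟨a, ha, h1, hBtrans _ _ _ h2 g⟩))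
    · -- rC x a, rB a y, rC y z : y ∈ B ∩ C
      have hy : y ∈ B ∩ C := ⟨(hBmem _ _ h2).2, (hCmem _ _ g).1⟩
      exact Or.inr (Or.inl (hCtrans _ _ _ (hCtrans _ _ _ h1 (hBC _ ha _ hy h2)) g))
    · -- rC x a, rB a y, rB y b, rC b z
      exact Or.inr (Or.inl (hCtrans _ _ _
        (hCtrans _ _ _ h1 (hBC _ ha _ hb (hBtrans _ _ _ h2 g1))) g2))
    · -- rC x a, rB a y, rC y b, rB b z : y ∈ B ∩ C
      have hy : y ∈ B ∩ C := ⟨(hBmem _ _ h2).2, (hCmem _ _ g1).1⟩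
      exact Or.inr (Or.inr (Or.inr ⟨b, hb,
        hCtrans _ _ _ h1 (hBC _ ha _ hb (hBtrans _ _ _ h2 (hCB _ hy _ hb g1))), g2⟩))
  have key : ∀ x y, Relation.EqvGen (fun x y => rB x y ∨ rC x y) x y →
      x = y ∨ R x y := by
    intro x y h
    induction h with
    | rel x y h =>
      rcases h with h | h
      · exact Or.inr (Or.inl h)
      · exact Or.inr (Or.inr (Or.inl h))
    | refl x => exact Or.inl rfl
    | symm x y _ ih =>
      rcases ih with rfl | h
      · exact Or.inl rfl
      · exact Or.inr (hRsymm _ _ h)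
    | trans x y z _ _ ih1 ih2 =>
      rcases ih1 with rfl | h1
      · exact ih2
      · rcases ih2 with rfl | h2
        · exact Or.inr h1
        · exact Or.inr (hRtrans _ _ _ h1 h2)
  refine ⟨?_, ?_, ?_⟩
  · intro b hb c hc
    constructor
    · intro h
      rcases key _ _ h with rfl | h
      · exact Or.inl ⟨⟨hb, hc⟩, ⟨hb, hc⟩, hBrefl _ hb⟩
      · rcases h with h | h | ⟨a, ha, h1, h2⟩ | ⟨a, ha, h1, h2⟩
        · exact Or.inr ⟨c, ⟨(hBmem _ _ h).2, hc⟩, h, hCrefl _ hc⟩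
        · exact Or.inr ⟨b, ⟨hb, (hCmem _ _ h).1⟩, hBrefl _ hb, h⟩
        · exact Or.inr ⟨a, ha, h1, h2⟩
        · have hbBC : b ∈ B ∩ C := ⟨hb, (hCmem _ _ h1).1⟩
          have hcBC : c ∈ B ∩ C := ⟨(hBmem _ _ h2).2, hc⟩
          exact Or.inl ⟨hbBC, hcBC, hBtrans _ _ _ (hCB _ hbBC _ ha h1) h2⟩
    · intro h
      rcases h with ⟨hbA, hcA, h⟩ | ⟨a, ha, h1, h2⟩
      · exact Relation.EqvGen.rel _ _ (Or.inl h)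
      · exact Relation.EqvGen.trans _ _ _ (Relation.EqvGen.rel _ _ (Or.inl h1))
          (Relation.EqvGen.rel _ _ (Or.inr h2))
  · intro x hx y hy
    constructor
    · intro h
      rcases key _ _ h with rfl | h
      · exact hBrefl _ hx
      · rcases h with h | h | ⟨a, ha, h1, h2⟩ | ⟨a, ha, h1, h2⟩
        · exact h
        · have hxBC : x ∈ B ∩ C := ⟨hx, (hCmem _ _ h).1⟩
          exact hCB _ hxBC _ ⟨hy, (hCmem _ _ h).2⟩ h
        · have hyBC : y ∈ B ∩ C := ⟨hy, (hCmem _ _ h2).2⟩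
          exact hBtrans _ _ _ h1 (hCB _ ha _ hyBC h2)
        · have hxBC : x ∈ B ∩ C := ⟨hx, (hCmem _ _ h1).1⟩
          exact hBtrans _ _ _ (hCB _ hxBC _ ha h1) h2
    · intro h
      exact Relation.EqvGen.rel _ _ (Or.inl h)
  · intro x hx y hy
    constructor
    · intro h
      rcases key _ _ h with rfl | h
      · exact hCrefl _ hx
      · rcases h with h | h | ⟨a, ha, h1, h2⟩ | ⟨a, ha, h1, h2⟩
        · have hxBC : x ∈ B ∩ C := ⟨(hBmem _ _ h).1, hx⟩
          exact hBC _ hxBC _ ⟨(hBmem _ _ h).2, hy⟩ h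
        · exact h
        · have hxBC : x ∈ B ∩ C := ⟨(hBmem _ _ h1).1, hx⟩
          exact hCtrans _ _ _ (hBC _ hxBC _ ha h1) h2
        · have hyBC : y ∈ B ∩ C := ⟨(hBmem _ _ h2).2, hy⟩
          exact hCtrans _ _ _ h1 (hBC _ ha _ hyBC h2)
    · intro h
      exact Relation.EqvGen.rel _ _ (Or.inr h)
end

section
/- The class of finite models of T₁ has the strong amalgamation property: if A, B, C are finite models of T₁ with A ⊆ B, A ⊆ C (as substructures) and B ∩ C = A, then there is a finite model D of T₁ with underlying set B ∪ C such that both B and C are substructures of D. -/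
/-- A `T₁`-structure with carrier sets `Os ⊆ Ω` (objects) and `Fs ⊆ Φ`
(functions): an equivalence relation `E` on `Os` together with
`eval : Φ × Ω → Ω` such that each `eval(f, −)` with `f ∈ Fs` is a selector
function for `E` on `Os`. -/
structure T1On (Ω Φ : Type) (Os : Set Ω) (Fs : Set Φ) : Type where
  E : Ω → Ω → Prop
  eval : Φ → Ω → Ω
  mem_of_rel : ∀ x y, E x y → x ∈ Os ∧ y ∈ Os
  refl : ∀ x ∈ Os, E x x
  symm : ∀ x y, E x y → E y x
  trans : ∀ x y z, E x y → E y z → E x z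
  eval_mem : ∀ f ∈ Fs, ∀ b ∈ Os, eval f b ∈ Os
  eval_rel : ∀ f ∈ Fs, ∀ b ∈ Os, E (eval f b) b
  eval_congr : ∀ f ∈ Fs, ∀ b b', E b b' → eval f b = eval f b'

namespace T1Amalg

variable {Ω Φ : Type} {Os Ot : Set Ω} {Fs Ft : Set Φ}

/-- The amalgamated equivalence relation: at most one alternation is needed. -/
def ED (S : T1On Ω Φ Os Fs) (T : T1On Ω Φ Ot Ft) (x y : Ω) : Prop :=
  S.E x y ∨ T.E x y ∨ (∃ a, S.E x a ∧ T.E a y) ∨ (∃ a, T.E x a ∧ S.E a y)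

theorem ED_flip {S : T1On Ω Φ Os Fs} {T : T1On Ω Φ Ot Ft} {x y : Ω}
    (h : ED S T x y) : ED T S y x := by
  rcases h with h | h | ⟨a, h1, h2⟩ | ⟨a, h1, h2⟩
  · exact Or.inr (Or.inl (S.symm _ _ h))
  · exact Or.inl (T.symm _ _ h)
  · exact Or.inr (Or.inr (Or.inl ⟨a, T.symm _ _ h2, S.symm _ _ h1⟩))
  · exact Or.inr (Or.inr (Or.inr ⟨a, S.symm _ _ h2, T.symm _ _ h1⟩))

theorem ED_symm {S : T1On Ω Φ Os Fs} {T : T1On Ω Φ Ot Ft} {x y : Ω}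
    (h : ED S T x y) : ED S T y x := by
  rcases h with h | h | ⟨a, h1, h2⟩ | ⟨a, h1, h2⟩
  · exact Or.inl (S.symm _ _ h)
  · exact Or.inr (Or.inl (T.symm _ _ h))
  · exact Or.inr (Or.inr (Or.inr ⟨a, T.symm _ _ h2, S.symm _ _ h1⟩))
  · exact Or.inr (Or.inr (Or.inl ⟨a, S.symm _ _ h2, T.symm _ _ h1⟩))

theorem ED_mem {S : T1On Ω Φ Os Fs} {T : T1On Ω Φ Ot Ft} {x y : Ω}
    (h : ED S T x y) : (x ∈ Os ∨ x ∈ Ot) ∧ (y ∈ Os ∨ y ∈ Ot) := by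
  rcases h with h | h | ⟨a, h1, h2⟩ | ⟨a, h1, h2⟩
  · exact ⟨Or.inl (S.mem_of_rel _ _ h).1, Or.inl (S.mem_of_rel _ _ h).2⟩
  · exact ⟨Or.inr (T.mem_of_rel _ _ h).1, Or.inr (T.mem_of_rel _ _ h).2⟩
  · exact ⟨Or.inl (S.mem_of_rel _ _ h1).1, Or.inr (T.mem_of_rel _ _ h2).2⟩
  · exact ⟨Or.inr (T.mem_of_rel _ _ h1).1, Or.inl (S.mem_of_rel _ _ h2).2⟩

theorem ED_refl {S : T1On Ω Φ Os Fs} {T : T1On Ω Φ Ot Ft} {x : Ω}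
    (h : x ∈ Os ∨ x ∈ Ot) : ED S T x x := by
  rcases h with h | h
  · exact Or.inl (S.refl _ h)
  · exact Or.inr (Or.inl (T.refl _ h))

section WithHE

variable {S : T1On Ω Φ Os Fs} {T : T1On Ω Φ Ot Ft}
variable (hET : ∀ x, x ∈ Os → x ∈ Ot → ∀ y, y ∈ Os → y ∈ Ot → (S.E x y ↔ T.E x y))

include hET

theorem ED_trans {x y z : Ω} (hxy : ED S T x y) (hyz : ED S T y z) :
    ED S T x z := by
  have cTS : ∀ u v, u ∈ Os → u ∈ Ot → v ∈ Os → v ∈ Ot → T.E u v → S.E u v :=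
    fun u v h1 h2 h3 h4 h => (hET u h1 h2 v h3 h4).mpr h
  rcases hxy with h | h | ⟨a, h1, h2⟩ | ⟨a, h1, h2⟩ <;>
    rcases hyz with g | g | ⟨a', g1, g2⟩ | ⟨a', g1, g2⟩
  -- 1: S, S
  · exact Or.inl (S.trans _ _ _ h g)
  -- 2: S, T
  · exact Or.inr (Or.inr (Or.inl ⟨y, h, g⟩))
  -- 3: S, (S a' T)
  · exact Or.inr (Or.inr (Or.inl ⟨a', S.trans _ _ _ h g1, g2⟩))
  -- 4: S, (T a' S)
  · have hyA : y ∈ Os ∧ y ∈ Ot := ⟨(S.mem_of_rel _ _ h).2, (T.mem_of_rel _ _ g1).1⟩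
    have haA : a' ∈ Os ∧ a' ∈ Ot := ⟨(S.mem_of_rel _ _ g2).1, (T.mem_of_rel _ _ g1).2⟩
    have : S.E y a' := cTS _ _ hyA.1 hyA.2 haA.1 haA.2 g1
    exact Or.inl (S.trans _ _ _ h (S.trans _ _ _ this g2))
  -- 5: T, S
  · exact Or.inr (Or.inr (Or.inr ⟨y, h, g⟩))
  -- 6: T, T
  · exact Or.inr (Or.inl (T.trans _ _ _ h g))
  -- 7: T, (S a' T)
  · have hyA : y ∈ Os ∧ y ∈ Ot := ⟨(S.mem_of_rel _ _ g1).1, (T.mem_of_rel _ _ h).2⟩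
    have haA : a' ∈ Os ∧ a' ∈ Ot := ⟨(S.mem_of_rel _ _ g1).2, (T.mem_of_rel _ _ g2).1⟩
    have : T.E y a' := (hET _ hyA.1 hyA.2 _ haA.1 haA.2).mp g1
    exact Or.inr (Or.inl (T.trans _ _ _ h (T.trans _ _ _ this g2)))
  -- 8: T, (T a' S)
  · exact Or.inr (Or.inr (Or.inr ⟨a', T.trans _ _ _ h g1, g2⟩))
  -- 9: (S a T), S
  · have haA : a ∈ Os ∧ a ∈ Ot := ⟨(S.mem_of_rel _ _ h1).2, (T.mem_of_rel _ _ h2).1⟩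
    have hyA : y ∈ Os ∧ y ∈ Ot := ⟨(S.mem_of_rel _ _ g).1, (T.mem_of_rel _ _ h2).2⟩
    have : S.E a y := cTS _ _ haA.1 haA.2 hyA.1 hyA.2 h2
    exact Or.inl (S.trans _ _ _ h1 (S.trans _ _ _ this g))
  -- 10: (S a T), T
  · exact Or.inr (Or.inr (Or.inl ⟨a, h1, T.trans _ _ _ h2 g⟩))
  -- 11: (S a T), (S a' T)
  · have haA : a ∈ Os ∧ a ∈ Ot := ⟨(S.mem_of_rel _ _ h1).2, (T.mem_of_rel _ _ h2).1⟩
    have hyA : y ∈ Os ∧ y ∈ Ot := ⟨(S.mem_of_rel _ _ g1).1, (T.mem_of_rel _ _ h2).2⟩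
    have : S.E a y := cTS _ _ haA.1 haA.2 hyA.1 hyA.2 h2
    exact Or.inr (Or.inr (Or.inl ⟨a', S.trans _ _ _ h1 (S.trans _ _ _ this g1), g2⟩))
  -- 12: (S a T), (T a' S)
  · have haA : a ∈ Os ∧ a ∈ Ot := ⟨(S.mem_of_rel _ _ h1).2, (T.mem_of_rel _ _ h2).1⟩
    have haA' : a' ∈ Os ∧ a' ∈ Ot := ⟨(S.mem_of_rel _ _ g2).1, (T.mem_of_rel _ _ g1).2⟩
    have haa' : T.E a a' := T.trans _ _ _ h2 g1
    have : S.E a a' := cTS _ _ haA.1 haA.2 haA'.1 haA'.2 haa'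
    exact Or.inl (S.trans _ _ _ h1 (S.trans _ _ _ this g2))
  -- 13: (T a S), S
  · exact Or.inr (Or.inr (Or.inr ⟨a, h1, S.trans _ _ _ h2 g⟩))
  -- 14: (T a S), T
  · have haA : a ∈ Os ∧ a ∈ Ot := ⟨(S.mem_of_rel _ _ h2).1, (T.mem_of_rel _ _ h1).2⟩
    have hyA : y ∈ Os ∧ y ∈ Ot := ⟨(S.mem_of_rel _ _ h2).2, (T.mem_of_rel _ _ g).1⟩
    have : T.E a y := (hET _ haA.1 haA.2 _ hyA.1 hyA.2).mp h2
    exact Or.inr (Or.inl (T.trans _ _ _ h1 (T.trans _ _ _ this g)))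
  -- 15: (T a S), (S a' T)
  · have haA : a ∈ Os ∧ a ∈ Ot := ⟨(S.mem_of_rel _ _ h2).1, (T.mem_of_rel _ _ h1).2⟩
    have haA' : a' ∈ Os ∧ a' ∈ Ot := ⟨(S.mem_of_rel _ _ g1).2, (T.mem_of_rel _ _ g2).1⟩
    have haa' : S.E a a' := S.trans _ _ _ h2 g1
    have : T.E a a' := (hET _ haA.1 haA.2 _ haA'.1 haA'.2).mp haa'
    exact Or.inr (Or.inl (T.trans _ _ _ h1 (T.trans _ _ _ this g2)))
  -- 16: (T a S), (T a' S)
  · have hyA : y ∈ Os ∧ y ∈ Ot := ⟨(S.mem_of_rel _ _ h2).2, (T.mem_of_rel _ _ g1).1⟩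
    have haA' : a' ∈ Os ∧ a' ∈ Ot := ⟨(S.mem_of_rel _ _ g2).1, (T.mem_of_rel _ _ g1).2⟩
    have : S.E y a' := cTS _ _ hyA.1 hyA.2 haA'.1 haA'.2 g1
    exact Or.inr (Or.inr (Or.inr ⟨a, h1, S.trans _ _ _ h2 (S.trans _ _ _ this g2)⟩))

theorem ED_restr {x y : Ω} (hx : x ∈ Os) (hy : y ∈ Os)
    (h : ED S T x y) : S.E x y := by
  rcases h with h | h | ⟨a, h1, h2⟩ | ⟨a, h1, h2⟩
  · exact h
  · exact (hET x hx (T.mem_of_rel _ _ h).1 y hy (T.mem_of_rel _ _ h).2).mpr h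
  · have haA : a ∈ Os ∧ a ∈ Ot := ⟨(S.mem_of_rel _ _ h1).2, (T.mem_of_rel _ _ h2).1⟩
    have : S.E a y := (hET a haA.1 haA.2 y hy (T.mem_of_rel _ _ h2).2).mpr h2
    exact S.trans _ _ _ h1 this
  · have haA : a ∈ Os ∧ a ∈ Ot := ⟨(S.mem_of_rel _ _ h2).1, (T.mem_of_rel _ _ h1).2⟩
    have : S.E x a := (hET x hx (T.mem_of_rel _ _ h1).1 a haA.1 haA.2).mpr h1
    exact S.trans _ _ _ this h2

end WithHE

theorem ED_bridge {S : T1On Ω Φ Os Fs} {T : T1On Ω Φ Ot Ft} {x y : Ω}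
    (hx : x ∈ Os) (hy : y ∉ Os) (h : ED S T x y) :
    ∃ a, (a ∈ Os ∧ a ∈ Ot) ∧ S.E x a ∧ T.E a y := by
  rcases h with h | h | ⟨a, h1, h2⟩ | ⟨a, h1, h2⟩
  · exact absurd (S.mem_of_rel _ _ h).2 hy
  · exact ⟨x, ⟨hx, (T.mem_of_rel _ _ h).1⟩, S.refl _ hx, h⟩
  · exact ⟨a, ⟨(S.mem_of_rel _ _ h1).2, (T.mem_of_rel _ _ h2).1⟩, h1, h2⟩
  · exact absurd (S.mem_of_rel _ _ h2).2 hy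

open Classical in
/-- The value of a function `f ∈ Fs` on a point `b ∈ Ot \ Os`. -/
noncomputable def bridge (S : T1On Ω Φ Os Fs) (T : T1On Ω Φ Ot Ft) (f : Φ) (b : Ω) : Ω :=
  letI : Nonempty Ω := ⟨b⟩
  if _ : ∃ a, (a ∈ Os ∧ a ∈ Ot) ∧ T.E a b
  then S.eval f (Classical.epsilon fun a => (a ∈ Os ∧ a ∈ Ot) ∧ T.E a b)
  else Classical.epsilon fun y => T.E y b

theorem bridge_congr {S : T1On Ω Φ Os Fs} {T : T1On Ω Φ Ot Ft} {f : Φ} {b b' : Ω}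
    (h : T.E b b') : bridge S T f b = bridge S T f b' := by
  have h1 : (fun a => (a ∈ Os ∧ a ∈ Ot) ∧ T.E a b) = (fun a => (a ∈ Os ∧ a ∈ Ot) ∧ T.E a b') :=
    funext fun a => propext ⟨fun ⟨hA, ha⟩ => ⟨hA, T.trans _ _ _ ha h⟩,
      fun ⟨hA, ha⟩ => ⟨hA, T.trans _ _ _ ha (T.symm _ _ h)⟩⟩
  have h2 : (fun y => T.E y b) = (fun y => T.E y b') :=
    funext fun y => propext ⟨fun hy => T.trans _ _ _ hy h,
      fun hy => T.trans _ _ _ hy (T.symm _ _ h)⟩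
  unfold bridge
  have hN : (⟨b⟩ : Nonempty Ω) = ⟨b'⟩ := Subsingleton.elim _ _
  rw [h1, h2, hN]

theorem bridge_spec {S : T1On Ω Φ Os Fs} {T : T1On Ω Φ Ot Ft} {f : Φ} {b : Ω}
    (hf : f ∈ Fs) (hb : b ∈ Ot) :
    (bridge S T f b ∈ Os ∨ bridge S T f b ∈ Ot) ∧ ED S T (bridge S T f b) b := by
  letI : Nonempty Ω := ⟨b⟩
  unfold bridge
  split
  · next h =>
    have ha := Classical.epsilon_spec h
    set a := Classical.epsilon fun a => (a ∈ Os ∧ a ∈ Ot) ∧ T.E a b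
    refine ⟨Or.inl (S.eval_mem f hf a ha.1.1), ?_⟩
    exact Or.inr (Or.inr (Or.inl ⟨a, S.eval_rel f hf a ha.1.1, ha.2⟩))
  · next h =>
    have hy : ∃ y, T.E y b := ⟨b, T.refl _ hb⟩
    have := Classical.epsilon_spec hy
    exact ⟨Or.inr (T.mem_of_rel _ _ this).1, Or.inr (Or.inl this)⟩

theorem bridge_eq {S : T1On Ω Φ Os Fs} {T : T1On Ω Φ Ot Ft}
    (hET : ∀ x, x ∈ Os → x ∈ Ot → ∀ y, y ∈ Os → y ∈ Ot → (S.E x y ↔ T.E x y))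
    {f : Φ} {a b : Ω} (hf : f ∈ Fs) (ha : a ∈ Os ∧ a ∈ Ot) (hab : T.E a b) :
    bridge S T f b = S.eval f a := by
  letI : Nonempty Ω := ⟨b⟩
  unfold bridge
  rw [dif_pos ⟨a, ha, hab⟩]
  have hc := Classical.epsilon_spec (⟨a, ha, hab⟩ : ∃ a, (a ∈ Os ∧ a ∈ Ot) ∧ T.E a b)
  set c := Classical.epsilon fun a => (a ∈ Os ∧ a ∈ Ot) ∧ T.E a b
  have hca : T.E c a := T.trans _ _ _ hc.2 (T.symm _ _ hab)
  have : S.E c a := (hET c hc.1.1 hc.1.2 a ha.1 ha.2).mpr hca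
  exact S.eval_congr f hf _ _ this

open Classical in
/-- Evaluation in the amalgam. -/
noncomputable def amalgEval (S : T1On Ω Φ Os Fs) (T : T1On Ω Φ Ot Ft) (f : Φ) (b : Ω) : Ω :=
  if f ∈ Fs then
    if b ∈ Os then S.eval f b
    else if f ∈ Ft ∧ b ∈ Ot then T.eval f b
    else if b ∈ Ot then bridge S T f b
    else b
  else if f ∈ Ft then
    if b ∈ Ot then T.eval f b
    else if b ∈ Os then bridge T S f b
    else b
  else b

theorem amalgEval_swap {S : T1On Ω Φ Os Fs} {T : T1On Ω Φ Ot Ft} {f : Φ} (b : Ω)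
    (hf : f ∉ Fs ∨ f ∉ Ft) : amalgEval S T f b = amalgEval T S f b := by
  by_cases h1 : f ∈ Fs <;> by_cases h2 : f ∈ Ft <;>
    by_cases h3 : b ∈ Os <;> by_cases h4 : b ∈ Ot <;>
    simp_all [amalgEval]

section CongrSpec

variable {S : T1On Ω Φ Os Fs} {T : T1On Ω Φ Ot Ft}
variable (hET : ∀ x, x ∈ Os → x ∈ Ot → ∀ y, y ∈ Os → y ∈ Ot → (S.E x y ↔ T.E x y))
variable (hST : ∀ g, g ∈ Fs → g ∈ Ft → ∀ c, c ∈ Os → c ∈ Ot → S.eval g c = T.eval g c)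

theorem hET_flip (hET' : ∀ x, x ∈ Os → x ∈ Ot → ∀ y, y ∈ Os → y ∈ Ot → (S.E x y ↔ T.E x y)) :
    ∀ x, x ∈ Ot → x ∈ Os → ∀ y, y ∈ Ot → y ∈ Os → (T.E x y ↔ S.E x y) :=
  fun x h1 h2 y h3 h4 => (hET' x h2 h1 y h4 h3).symm

include hET hST

theorem amalgEval_congr_aux {f : Φ} {b b' : Ω} (hf : f ∈ Fs) (hb : b ∈ Os)
    (h : ED S T b b') : amalgEval S T f b = amalgEval S T f b' := by
  classical
  by_cases hb' : b' ∈ Os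
  · have hbb' := ED_restr hET hb hb' h
    simp only [amalgEval, if_pos hf, if_pos hb, if_pos hb']
    exact S.eval_congr f hf _ _ hbb'
  · obtain ⟨a, haA, h1, h2⟩ := ED_bridge hb hb' h
    have hb'T : b' ∈ Ot := (T.mem_of_rel _ _ h2).2
    by_cases hft : f ∈ Ft
    · simp only [amalgEval, if_pos hf, if_pos hb, if_neg hb',
        if_pos (⟨hft, hb'T⟩ : f ∈ Ft ∧ b' ∈ Ot)]
      calc S.eval f b = S.eval f a := S.eval_congr f hf _ _ h1
        _ = T.eval f a := hST f hf hft a haA.1 haA.2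
        _ = T.eval f b' := T.eval_congr f hft _ _ h2
    · have hneg : ¬ (f ∈ Ft ∧ b' ∈ Ot) := fun hc => hft hc.1
      simp only [amalgEval, if_pos hf, if_pos hb, if_neg hb', if_neg hneg, if_pos hb'T]
      rw [bridge_eq hET hf haA h2]
      exact S.eval_congr f hf _ _ h1

theorem amalgEval_congr_left {f : Φ} {b b' : Ω} (hf : f ∈ Fs)
    (h : ED S T b b') : amalgEval S T f b = amalgEval S T f b' := by
  classical
  by_cases hb : b ∈ Os
  · exact amalgEval_congr_aux hET hST hf hb h
  by_cases hb' : b' ∈ Os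
  · exact (amalgEval_congr_aux hET hST hf hb' (ED_symm h)).symm
  have hbT : b ∈ Ot := ((ED_mem h).1).resolve_left hb
  have hb'T : b' ∈ Ot := ((ED_mem h).2).resolve_left hb'
  have hTE : T.E b b' := ED_restr (hET_flip hET) hbT hb'T (ED_symm (ED_flip h))
  by_cases hft : f ∈ Ft
  · simp only [amalgEval, if_pos hf, if_neg hb, if_neg hb',
      if_pos (⟨hft, hbT⟩ : f ∈ Ft ∧ b ∈ Ot), if_pos (⟨hft, hb'T⟩ : f ∈ Ft ∧ b' ∈ Ot)]
    exact T.eval_congr f hft _ _ hTE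
  · have hneg1 : ¬ (f ∈ Ft ∧ b ∈ Ot) := fun hc => hft hc.1
    have hneg2 : ¬ (f ∈ Ft ∧ b' ∈ Ot) := fun hc => hft hc.1
    simp only [amalgEval, if_pos hf, if_neg hb, if_neg hb', if_neg hneg1, if_neg hneg2,
      if_pos hbT, if_pos hb'T]
    exact bridge_congr hTE

omit hET hST

theorem amalgEval_spec_left {f : Φ} {b : Ω} (hf : f ∈ Fs) (hb : b ∈ Os ∨ b ∈ Ot) :
    (amalgEval S T f b ∈ Os ∨ amalgEval S T f b ∈ Ot) ∧ ED S T (amalgEval S T f b) b := by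
  classical
  by_cases hbs : b ∈ Os
  · simp only [amalgEval, if_pos hf, if_pos hbs]
    exact ⟨Or.inl (S.eval_mem f hf b hbs), Or.inl (S.eval_rel f hf b hbs)⟩
  · have hbt : b ∈ Ot := hb.resolve_left hbs
    by_cases hft : f ∈ Ft
    · simp only [amalgEval, if_pos hf, if_neg hbs, if_pos (⟨hft, hbt⟩ : f ∈ Ft ∧ b ∈ Ot)]
      exact ⟨Or.inr (T.eval_mem f hft b hbt), Or.inr (Or.inl (T.eval_rel f hft b hbt))⟩
    · have hneg : ¬ (f ∈ Ft ∧ b ∈ Ot) := fun hc => hft hc.1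
      simp only [amalgEval, if_pos hf, if_neg hbs, if_neg hneg, if_pos hbt]
      exact bridge_spec hf hbt

end CongrSpec

end T1Amalg



open T1Amalg in
/-- Strong amalgamation for finite models of `T₁`: if `B` and `C` are finite
`T₁`-structures whose intersection `A` is a common substructure (the relations
and evaluations agree on `A`, and `A` is closed under evaluation by common
functions), then there is a `T₁`-structure `D` with underlying sets `B ∪ C`
having both `B` and `C` as substructures. -/
theorem statement_13 (Ω Φ : Type) (OB OC : Set Ω) (FB FC : Set Φ)
    (hOB : OB.Finite) (hOC : OC.Finite) (hFB : FB.Finite) (hFC : FC.Finite)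
    (SB : T1On Ω Φ OB FB) (SC : T1On Ω Φ OC FC)
    (hE : ∀ x ∈ OB ∩ OC, ∀ y ∈ OB ∩ OC, (SB.E x y ↔ SC.E x y))
    (heval : ∀ f ∈ FB ∩ FC, ∀ b ∈ OB ∩ OC, SB.eval f b = SC.eval f b)
    (hclosed : ∀ f ∈ FB ∩ FC, ∀ b ∈ OB ∩ OC, SB.eval f b ∈ OB ∩ OC) :
    ∃ SD : T1On Ω Φ (OB ∪ OC) (FB ∪ FC),
      (∀ x ∈ OB, ∀ y ∈ OB, (SD.E x y ↔ SB.E x y)) ∧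
      (∀ f ∈ FB, ∀ b ∈ OB, SD.eval f b = SB.eval f b) ∧
      (∀ x ∈ OC, ∀ y ∈ OC, (SD.E x y ↔ SC.E x y)) ∧
      (∀ f ∈ FC, ∀ b ∈ OC, SD.eval f b = SC.eval f b) := by
  classical
  have hET : ∀ x, x ∈ OB → x ∈ OC → ∀ y, y ∈ OB → y ∈ OC → (SB.E x y ↔ SC.E x y) :=
    fun x h1 h2 y h3 h4 => hE x ⟨h1, h2⟩ y ⟨h3, h4⟩
  have hTE : ∀ x, x ∈ OC → x ∈ OB → ∀ y, y ∈ OC → y ∈ OB → (SC.E x y ↔ SB.E x y) :=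
    fun x h1 h2 y h3 h4 => (hE x ⟨h2, h1⟩ y ⟨h4, h3⟩).symm
  have hST : ∀ g, g ∈ FB → g ∈ FC → ∀ c, c ∈ OB → c ∈ OC → SB.eval g c = SC.eval g c :=
    fun g h1 h2 c h3 h4 => heval g ⟨h1, h2⟩ c ⟨h3, h4⟩
  have hTS : ∀ g, g ∈ FC → g ∈ FB → ∀ c, c ∈ OC → c ∈ OB → SC.eval g c = SB.eval g c :=
    fun g h1 h2 c h3 h4 => (heval g ⟨h2, h1⟩ c ⟨h4, h3⟩).symm
  refine ⟨{ E := ED SB SC, eval := amalgEval SB SC,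
            mem_of_rel := ?_, refl := ?_, symm := ?_, trans := ?_,
            eval_mem := ?_, eval_rel := ?_, eval_congr := ?_ }, ?_, ?_, ?_, ?_⟩
  · intro x y h
    exact ⟨(ED_mem h).1, (ED_mem h).2⟩
  · intro x hx
    exact ED_refl hx
  · intro x y h
    exact ED_symm h
  · intro x y z hxy hyz
    exact ED_trans hET hxy hyz
  · intro f hf b hb
    rcases hf with hf | hf
    · exact (amalgEval_spec_left hf hb).1
    · by_cases hfB : f ∈ FB
      · exact (amalgEval_spec_left hfB hb).1
      · rw [amalgEval_swap b (Or.inl hfB)]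
        have := (amalgEval_spec_left (S := SC) (T := SB) hf (Or.symm hb)).1
        exact this.symm
  · intro f hf b hb
    rcases hf with hf | hf
    · exact (amalgEval_spec_left hf hb).2
    · by_cases hfB : f ∈ FB
      · exact (amalgEval_spec_left hfB hb).2
      · rw [amalgEval_swap b (Or.inl hfB)]
        have := (amalgEval_spec_left (S := SC) (T := SB) hf (Or.symm hb)).2
        exact ED_symm (ED_flip this)
  · intro f hf b b' h
    rcases hf with hf | hf
    · exact amalgEval_congr_left hET hST hf h
    · by_cases hfB : f ∈ FB
      · exact amalgEval_congr_left hET hST hfB h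
      · rw [amalgEval_swap b (Or.inl hfB), amalgEval_swap b' (Or.inl hfB)]
        exact amalgEval_congr_left hTE hTS hf (ED_symm (ED_flip h))
  · intro x hx y hy
    exact ⟨fun h => ED_restr hET hx hy h, fun h => Or.inl h⟩
  · intro f hf b hb
    simp only [amalgEval, if_pos hf, if_pos hb]
  · intro x hx y hy
    refine ⟨fun h => ?_, fun h => Or.inr (Or.inl h)⟩
    exact ED_restr hTE hx hy (ED_symm (ED_flip h))
  · intro f hf b hb
    by_cases hfB : f ∈ FB
    · by_cases hbB : b ∈ OB
      · simp only [amalgEval, if_pos hfB, if_pos hbB]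
        exact hST f hfB hf b hbB hb
      · simp only [amalgEval, if_pos hfB, if_neg hbB,
          if_pos (⟨hf, hb⟩ : f ∈ FC ∧ b ∈ OC)]
    · simp only [amalgEval, if_neg hfB, if_pos hf, if_pos hb]
end
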